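/- arXiv:2503.09008 — 3 statements merged into one kernel-verified Lean document; each statement's English description precedes it below -/
import Mathlib

section
/- Let G be a finite simple connected graph on N ≥ 2 vertices with adjacency matrix A and diagonal degree matrix D (so every vertex has degree at least 1). Then for every real γ > 0, the second largest eigenvalue of the normalized adjacency operator D^{-1/2} A D^{-1/2} is strictly smaller than the second largest eigenvalue of the augmented normalized adjacency operator (γI + D)^{-1/2}(γI + A)(γI + D)^{-1/2}; that is, λ_{N−1}(D^{-1/2} A D^{-1/2}) < λ_{N−1}((γI + D)^{-1/2}(γI + A)(γI + D)^{-1/2}), where eigenvalues of a symmetric matrix are listed in nondecreasing order λ₁ ≤ ⋯ ≤ λ_N. -/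
/-!
Substitute `x = D^{-1/2} y`. The quadratic forms of `S = D^{-1/2} A D^{-1/2}` become
`⟪y, S y⟫ = ⟪x, A x⟫` and `⟪y, y⟫ = ⟪x, D x⟫`, and for `w = (γI + D)^{1/2} x` those of `Sγ` become
`⟪w, Sγ w⟫ = γ‖x‖² + ⟪x, A x⟫` and `⟪w, w⟫ = γ‖x‖² + ⟪x, D x⟫`. Let `μ₂ ≤ μ₁` be the two largest
eigenvalues of `S`. In the plane spanned by their eigenvectors pick `y ≠ 0` such that `w` is
orthogonal to the top eigenvector of `Sγ`. Then `μ₂ ⟪x, D x⟫ ≤ ⟪x, A x⟫`, while by min-max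
`γ‖x‖² + ⟪x, A x⟫ ≤ μγ₂ (γ‖x‖² + ⟪x, D x⟫)`. Finally `μ₂ < 1`: the Laplacian `D - A` is positive
semidefinite and, `G` being connected, its quadratic form vanishes only on constant vectors, so
`S ≤ 1` with equality only on the line through `D^{1/2} 1`. Hence `μ₂ (γ‖x‖² + ⟪x, D x⟫) < γ‖x‖² + ⟪x, A x⟫ ≤ μγ₂ (γ‖x‖² + ⟪x, D x⟫)`.
-/

open Matrix

namespace Matrix.IsHermitian

variable {n : Type*} [Fintype n] [DecidableEq n] {M : Matrix n n ℝ} (hM : M.IsHermitian)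

lemma dotProduct_eigenvectorBasis (i j : n) :
    ⇑(hM.eigenvectorBasis i) ⬝ᵥ ⇑(hM.eigenvectorBasis j) = if i = j then 1 else 0 := by
  rw [← orthonormal_iff_ite.mp hM.eigenvectorBasis.orthonormal i j,
    EuclideanSpace.inner_eq_star_dotProduct, star_trivial, dotProduct_comm]

lemma dotProduct_eq_sum_mul (y z : n → ℝ) :
    y ⬝ᵥ z = ∑ i, (⇑(hM.eigenvectorBasis i) ⬝ᵥ y) * (⇑(hM.eigenvectorBasis i) ⬝ᵥ z) := by
  have := hM.eigenvectorBasis.sum_inner_mul_inner (WithLp.toLp 2 y) (WithLp.toLp 2 z)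
  simp only [EuclideanSpace.inner_eq_star_dotProduct, star_trivial] at this
  rw [dotProduct_comm, ← this]
  exact Finset.sum_congr rfl fun i _ => by rw [dotProduct_comm z]

lemma eigenvectorBasis_dotProduct_mulVec (i : n) (y : n → ℝ) :
    ⇑(hM.eigenvectorBasis i) ⬝ᵥ (M *ᵥ y) =
      hM.eigenvalues i * (⇑(hM.eigenvectorBasis i) ⬝ᵥ y) := by
  rw [dotProduct_mulVec, ← mulVec_transpose, ← conjTranspose_eq_transpose_of_trivial, hM,
    hM.mulVec_eigenvectorBasis, smul_dotProduct, smul_eq_mul]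

lemma dotProduct_self_eq_sum_sq (y : n → ℝ) :
    y ⬝ᵥ y = ∑ i, (⇑(hM.eigenvectorBasis i) ⬝ᵥ y) ^ 2 := by
  simp only [hM.dotProduct_eq_sum_mul y y, sq]

lemma dotProduct_mulVec_eq_sum (y : n → ℝ) :
    y ⬝ᵥ (M *ᵥ y) = ∑ i, hM.eigenvalues i * (⇑(hM.eigenvectorBasis i) ⬝ᵥ y) ^ 2 := by
  simp only [hM.dotProduct_eq_sum_mul y, eigenvectorBasis_dotProduct_mulVec]
  exact Finset.sum_congr rfl fun i _ => by ring

lemma dotProduct_mulVec_le_of_eigenvalues_le {c : ℝ} {y : n → ℝ}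
    (h : ∀ i, ⇑(hM.eigenvectorBasis i) ⬝ᵥ y ≠ 0 → hM.eigenvalues i ≤ c) :
    y ⬝ᵥ (M *ᵥ y) ≤ c * (y ⬝ᵥ y) := by
  rw [hM.dotProduct_mulVec_eq_sum, hM.dotProduct_self_eq_sum_sq, Finset.mul_sum]
  refine Finset.sum_le_sum fun i _ => ?_
  by_cases hi : ⇑(hM.eigenvectorBasis i) ⬝ᵥ y = 0
  · simp [hi]
  · exact mul_le_mul_of_nonneg_right (h i hi) (sq_nonneg _)

lemma le_dotProduct_mulVec_of_le_eigenvalues {c : ℝ} {y : n → ℝ}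
    (h : ∀ i, ⇑(hM.eigenvectorBasis i) ⬝ᵥ y ≠ 0 → c ≤ hM.eigenvalues i) :
    c * (y ⬝ᵥ y) ≤ y ⬝ᵥ (M *ᵥ y) := by
  rw [hM.dotProduct_mulVec_eq_sum, hM.dotProduct_self_eq_sum_sq, Finset.mul_sum]
  refine Finset.sum_le_sum fun i _ => ?_
  by_cases hi : ⇑(hM.eigenvectorBasis i) ⬝ᵥ y = 0
  · simp [hi]
  · exact mul_le_mul_of_nonneg_right (h i hi) (sq_nonneg _)

/-- The last conjunct says that `y` lies in the span of the eigenvectors `j₁` and `j₂`. -/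
lemma exists_ne_zero_orthogonal_mem_span_pair {j₁ j₂ : n} (hj : j₁ ≠ j₂) (z : n → ℝ) :
    ∃ y ≠ 0, z ⬝ᵥ y = 0 ∧
      ∀ i, ⇑(hM.eigenvectorBasis i) ⬝ᵥ y ≠ 0 → i = j₁ ∨ i = j₂ := by
  set v := fun i => ⇑(hM.eigenvectorBasis i)
  have hcoef : ∀ p q i, v i ⬝ᵥ (p • v j₁ + q • v j₂) =
      (if i = j₁ then p else 0) + (if i = j₂ then q else 0) := by
    intro p q i
    simp only [v, dotProduct_add, dotProduct_smul, hM.dotProduct_eigenvectorBasis, smul_eq_mul,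
      mul_ite, mul_one, mul_zero]
  have of_coeffs : ∀ p q : ℝ, (p ≠ 0 ∨ q ≠ 0) → z ⬝ᵥ (p • v j₁ + q • v j₂) = 0 →
      ∃ y ≠ 0, z ⬝ᵥ y = 0 ∧ ∀ i, v i ⬝ᵥ y ≠ 0 → i = j₁ ∨ i = j₂ := by
    refine fun p q hpq hz => ⟨_, fun hy => ?_, hz, fun i hi => ?_⟩
    · rcases hpq with hp | hq
      · exact hp (by simpa [hcoef, hj] using congrArg (v j₁ ⬝ᵥ ·) hy)
      · exact hq (by simpa [hcoef, hj.symm] using congrArg (v j₂ ⬝ᵥ ·) hy)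
    · by_contra! h
      simp [hcoef, h.1, h.2] at hi
  by_cases ha : z ⬝ᵥ v j₁ = 0
  · exact of_coeffs 1 0 (by simp) (by simp [ha])
  · refine of_coeffs (z ⬝ᵥ v j₂) (-(z ⬝ᵥ v j₁)) (.inr (neg_ne_zero.mpr ha)) ?_
    simp only [dotProduct_add, dotProduct_smul, smul_eq_mul]
    ring

/-- Min-max: the plane spanned by the eigenvectors `j₁`, `j₂` meets the hyperplane `z⊥`. -/
lemma eigenvalues_lt_of_dotProduct_mulVec_lt {c : ℝ} {z : n → ℝ}
    (h : ∀ y ≠ 0, z ⬝ᵥ y = 0 → y ⬝ᵥ (M *ᵥ y) < c * (y ⬝ᵥ y)) {j₁ j₂ : n} (hj : j₁ ≠ j₂)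
    (h₁₂ : hM.eigenvalues j₁ ≤ hM.eigenvalues j₂) : hM.eigenvalues j₁ < c := by
  by_contra! hc
  obtain ⟨y, hy, hz, hsupp⟩ := hM.exists_ne_zero_orthogonal_mem_span_pair hj z
  refine (h y hy hz).not_ge (hM.le_dotProduct_mulVec_of_le_eigenvalues fun i hi => ?_)
  rcases hsupp i hi with rfl | rfl
  exacts [hc, hc.trans h₁₂]

end Matrix.IsHermitian

section Scaling

variable {n R : Type*} [Fintype n] [CommSemiring R]

lemma diagonal_mulVec_eq_mul [DecidableEq n] (s y : n → R) : diagonal s *ᵥ y = s * y :=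
  funext (mulVec_diagonal s y)

lemma dotProduct_mul_eq_mul_dotProduct (s y z : n → R) : y ⬝ᵥ (s * z) = (s * y) ⬝ᵥ z :=
  Finset.sum_congr rfl fun i _ => by simp only [Pi.mul_apply]; ring

lemma dotProduct_diagonal_mul_mul_diagonal_mulVec [DecidableEq n] (M : Matrix n n R)
    (s y : n → R) : y ⬝ᵥ ((diagonal s * M * diagonal s) *ᵥ y) = (s * y) ⬝ᵥ (M *ᵥ (s * y)) := by
  rw [← mulVec_mulVec, ← mulVec_mulVec, diagonal_mulVec_eq_mul, diagonal_mulVec_eq_mul,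
    dotProduct_mul_eq_mul_dotProduct]

lemma dotProduct_self_eq_dotProduct_diagonal_mulVec [DecidableEq n] {s d : n → R}
    (h : ∀ i, s i ^ 2 * d i = 1) (y : n → R) :
    y ⬝ᵥ y = (s * y) ⬝ᵥ (diagonal d *ᵥ (s * y)) := by
  rw [diagonal_mulVec_eq_mul]
  refine Finset.sum_congr rfl fun i _ => ?_
  simp only [Pi.mul_apply]
  rw [show s i * y i * (d i * (s i * y i)) = s i ^ 2 * d i * (y i * y i) by ring, h, one_mul]

end Scaling

lemma dotProduct_self_pos {n R : Type*} [Fintype n] [Ring R] [LinearOrder R] [IsStrictOrderedRing R]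
    {y : n → R} (hy : y ≠ 0) : 0 < y ⬝ᵥ y :=
  (Finset.sum_nonneg fun i _ => mul_self_nonneg (y i)).lt_of_ne'
    (dotProduct_self_eq_zero.not.mpr hy)

lemma Real.inv_sqrt_sq_mul_self {a : ℝ} (ha : 0 < a) : (√a)⁻¹ ^ 2 * a = 1 := by
  rw [inv_pow, Real.sq_sqrt ha.le, inv_mul_cancel₀ ha.ne']

namespace SimpleGraph

variable {V : Type*} [Fintype V] [DecidableEq V] (G : SimpleGraph V) [DecidableRel G.Adj]

noncomputable def invSqrtDegree (v : V) : ℝ := (√(G.degree v))⁻¹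

noncomputable def sqrtAugDegree (γ : ℝ) (v : V) : ℝ := √(γ + G.degree v)

noncomputable def normAdjMatrix : Matrix V V ℝ :=
  diagonal G.invSqrtDegree * G.adjMatrix ℝ * diagonal G.invSqrtDegree

noncomputable def augNormAdjMatrix (γ : ℝ) : Matrix V V ℝ :=
  diagonal (G.sqrtAugDegree γ)⁻¹ * (γ • 1 + G.adjMatrix ℝ) * diagonal (G.sqrtAugDegree γ)⁻¹

lemma dotProduct_adjMatrix_mulVec_le (x : V → ℝ) :
    x ⬝ᵥ (G.adjMatrix ℝ *ᵥ x) ≤ x ⬝ᵥ (G.degMatrix ℝ *ᵥ x) := by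
  have := (posSemidef_lapMatrix ℝ G).dotProduct_mulVec_nonneg x
  rwa [star_trivial, lapMatrix, sub_mulVec, dotProduct_sub, sub_nonneg] at this

lemma dotProduct_normAdjMatrix_mulVec (y : V → ℝ) :
    y ⬝ᵥ (G.normAdjMatrix *ᵥ y) =
      (G.invSqrtDegree * y) ⬝ᵥ (G.adjMatrix ℝ *ᵥ (G.invSqrtDegree * y)) :=
  dotProduct_diagonal_mul_mul_diagonal_mulVec _ _ y

lemma dotProduct_self_eq_degMatrix (hdeg : ∀ v, 0 < G.degree v) (y : V → ℝ) :
    y ⬝ᵥ y = (G.invSqrtDegree * y) ⬝ᵥ (G.degMatrix ℝ *ᵥ (G.invSqrtDegree * y)) :=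
  dotProduct_self_eq_dotProduct_diagonal_mulVec
    (fun v => Real.inv_sqrt_sq_mul_self (Nat.cast_pos.mpr (hdeg v))) y

lemma dotProduct_augNormAdjMatrix_mulVec {γ : ℝ} (hγ : 0 < γ) (x : V → ℝ) :
    (G.sqrtAugDegree γ * x) ⬝ᵥ (G.augNormAdjMatrix γ *ᵥ (G.sqrtAugDegree γ * x)) =
      γ * (x ⬝ᵥ x) + x ⬝ᵥ (G.adjMatrix ℝ *ᵥ x) := by
  have hx : (G.sqrtAugDegree γ)⁻¹ * (G.sqrtAugDegree γ * x) = x := by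
    ext v
    have : 0 < G.sqrtAugDegree γ v := Real.sqrt_pos.mpr (by positivity)
    simp [this.ne']
  rw [augNormAdjMatrix, dotProduct_diagonal_mul_mul_diagonal_mulVec, hx, add_mulVec, smul_mulVec,
    one_mulVec, dotProduct_add, dotProduct_smul, smul_eq_mul]

lemma dotProduct_self_sqrtAugDegree_mul {γ : ℝ} (hγ : 0 ≤ γ) (x : V → ℝ) :
    (G.sqrtAugDegree γ * x) ⬝ᵥ (G.sqrtAugDegree γ * x) =
      γ * (x ⬝ᵥ x) + x ⬝ᵥ (G.degMatrix ℝ *ᵥ x) := by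
  rw [degMatrix, diagonal_mulVec_eq_mul]
  simp only [dotProduct, Finset.mul_sum, ← Finset.sum_add_distrib]
  refine Finset.sum_congr rfl fun v _ => ?_
  simp only [Pi.mul_apply, sqrtAugDegree]
  linear_combination (x v * x v) * Real.sq_sqrt (by positivity : 0 ≤ γ + G.degree v)

variable {G}

lemma Preconnected.dotProduct_adjMatrix_mulVec_lt (hG : G.Preconnected) {x : V → ℝ} {u v : V}
    (huv : x u ≠ x v) : x ⬝ᵥ (G.adjMatrix ℝ *ᵥ x) < x ⬝ᵥ (G.degMatrix ℝ *ᵥ x) := by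
  refine (G.dotProduct_adjMatrix_mulVec_le x).lt_of_ne fun h => huv ?_
  refine (G.lapMatrix_toLinearMap₂'_apply'_eq_zero_iff_forall_reachable x).mp ?_ u v (hG u v)
  rw [toLinearMap₂'_apply', lapMatrix, sub_mulVec, dotProduct_sub, h, sub_self]

lemma Preconnected.dotProduct_normAdjMatrix_mulVec_lt (hG : G.Preconnected)
    (hdeg : ∀ v, 0 < G.degree v) {y : V → ℝ} (hy : y ≠ 0) {v₀ : V} (hv₀ : y v₀ = 0) :
    y ⬝ᵥ (G.normAdjMatrix *ᵥ y) < y ⬝ᵥ y := by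
  obtain ⟨u, hu⟩ := Function.ne_iff.mp hy
  rw [G.dotProduct_normAdjMatrix_mulVec, G.dotProduct_self_eq_degMatrix hdeg]
  refine hG.dotProduct_adjMatrix_mulVec_lt (u := u) (v := v₀) ?_
  have : G.invSqrtDegree u ≠ 0 := by unfold invSqrtDegree; positivity [hdeg u]
  simp [hv₀, this, show y u ≠ 0 from hu]

lemma Preconnected.eigenvalues_normAdjMatrix_lt_one (hG : G.Preconnected)
    (hdeg : ∀ v, 0 < G.degree v) (hS : G.normAdjMatrix.IsHermitian) {j₁ j₂ : V} (hj : j₁ ≠ j₂)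
    (h₁₂ : hS.eigenvalues j₁ ≤ hS.eigenvalues j₂) : hS.eigenvalues j₁ < 1 := by
  refine hS.eigenvalues_lt_of_dotProduct_mulVec_lt (z := Pi.single j₁ 1) (fun y hy hz => ?_) hj h₁₂
  rw [one_mul]
  exact hG.dotProduct_normAdjMatrix_mulVec_lt hdeg hy (by simpa using hz)

theorem Preconnected.exists_lt_eigenvalues_augNormAdjMatrix (hG : G.Preconnected)
    (hdeg : ∀ v, 0 < G.degree v) {γ : ℝ} (hγ : 0 < γ) (hS : G.normAdjMatrix.IsHermitian)
    (hSγ : (G.augNormAdjMatrix γ).IsHermitian) {j₁ j₂ : V} (hj : j₁ ≠ j₂)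
    (h₁₂ : hS.eigenvalues j₁ ≤ hS.eigenvalues j₂) (k : V) :
    ∃ i ≠ k, hS.eigenvalues j₁ < hSγ.eigenvalues i := by
  by_contra! hk
  set c := hS.eigenvalues j₁
  set r := G.sqrtAugDegree γ
  set s := G.invSqrtDegree
  obtain ⟨y, hy, horth, hsupp⟩ :=
    hS.exists_ne_zero_orthogonal_mem_span_pair hj (s * (r * ⇑(hSγ.eigenvectorBasis k)))
  set x := s * y
  have hxD : x ⬝ᵥ (G.degMatrix ℝ *ᵥ x) = y ⬝ᵥ y := (G.dotProduct_self_eq_degMatrix hdeg y).symm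
  have hx : 0 < x ⬝ᵥ x := by
    refine dotProduct_self_pos fun h => hy ?_
    rw [← dotProduct_self_eq_zero, ← hxD, h, zero_dotProduct]
  have hlower : c * (x ⬝ᵥ (G.degMatrix ℝ *ᵥ x)) ≤ x ⬝ᵥ (G.adjMatrix ℝ *ᵥ x) := by
    rw [hxD, ← G.dotProduct_normAdjMatrix_mulVec]
    refine hS.le_dotProduct_mulVec_of_le_eigenvalues fun i hi => ?_
    rcases hsupp i hi with rfl | rfl
    exacts [le_rfl, h₁₂]
  have hupper : γ * (x ⬝ᵥ x) + x ⬝ᵥ (G.adjMatrix ℝ *ᵥ x) ≤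
      c * (γ * (x ⬝ᵥ x) + x ⬝ᵥ (G.degMatrix ℝ *ᵥ x)) := by
    rw [← G.dotProduct_augNormAdjMatrix_mulVec hγ, ← G.dotProduct_self_sqrtAugDegree_mul hγ.le]
    refine hSγ.dotProduct_mulVec_le_of_eigenvalues_le fun i hi => hk i fun hik => hi ?_
    rwa [hik, dotProduct_mul_eq_mul_dotProduct, dotProduct_mul_eq_mul_dotProduct]
  linarith [mul_lt_mul_of_pos_right (hG.eigenvalues_normAdjMatrix_lt_one hdeg hS hj h₁₂)
    (mul_pos hγ hx)]

end SimpleGraph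

/-- **Self-loops increase the second largest eigenvalue of the normalized adjacency operator.**
For a finite simple connected graph `G` on `N ≥ 2` vertices with adjacency matrix `A` and
degree matrix `D`, and any `γ > 0`, the second largest eigenvalue (1-based index `N-1`,
i.e. 0-based index `N-2` in a nondecreasing listing) of `D^{-1/2} A D^{-1/2}` is strictly
smaller than that of `(γI + D)^{-1/2} (γI + A) (γI + D)^{-1/2}`. -/
theorem selfloops_increase_second_largest_eigenvalue
    {N : ℕ} (hN : 2 ≤ N)
    (G : SimpleGraph (Fin N)) [DecidableRel G.Adj]
    (hconn : G.Connected) (γ : ℝ) (hγ : 0 < γ)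
    (S Sγ : Matrix (Fin N) (Fin N) ℝ)
    (hSdef : S = Matrix.diagonal (fun v => (Real.sqrt (G.degree v))⁻¹) *
      G.adjMatrix ℝ * Matrix.diagonal (fun v => (Real.sqrt (G.degree v))⁻¹))
    (hSγdef : Sγ = Matrix.diagonal (fun v => (Real.sqrt (γ + G.degree v))⁻¹) *
      (γ • (1 : Matrix (Fin N) (Fin N) ℝ) + G.adjMatrix ℝ) *
      Matrix.diagonal (fun v => (Real.sqrt (γ + G.degree v))⁻¹))
    (hS : S.IsHermitian) (hSγ : Sγ.IsHermitian)
    (μ μγ : Fin N → ℝ) (hμmono : Monotone μ) (hμγmono : Monotone μγ)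
    (σ σγ : Equiv.Perm (Fin N))
    (hμ : μ = hS.eigenvalues ∘ σ) (hμγ : μγ = hSγ.eigenvalues ∘ σγ) :
    μ ⟨N - 2, by omega⟩ < μγ ⟨N - 2, by omega⟩ := by
  have := Fin.nontrivial_iff_two_le.mpr hN
  obtain rfl : S = G.normAdjMatrix := hSdef
  obtain rfl : Sγ = G.augNormAdjMatrix γ := hSγdef
  subst hμ hμγ
  set top : Fin N := ⟨N - 1, by omega⟩
  set second : Fin N := ⟨N - 2, by omega⟩
  obtain ⟨i, hi, hlt⟩ := hconn.preconnected.exists_lt_eigenvalues_augNormAdjMatrix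
    (hconn.preconnected.degree_pos_of_nontrivial ·) hγ hS hSγ (j₁ := σ second) (j₂ := σ top)
    (σ.injective.ne (by simp [top, second, Fin.ext_iff]; omega))
    (hμmono (Fin.mk_le_mk.mpr (by omega))) (σγ top)
  have hi_top : (σγ.symm i : ℕ) ≠ N - 1 := fun h =>
    hi (by rw [← show σγ.symm i = top from Fin.ext h, σγ.apply_symm_apply])
  refine hlt.trans_le ?_
  simpa using hμγmono (show σγ.symm i ≤ second from Fin.le_def.mpr (by dsimp only [second]; omega))
end

section
/- Let G be a finite simple connected graph on N ≥ 2 vertices with adjacency matrix A, diagonal degree matrix D, maximum vertex degree d_max, and (unweighted shortest-path) diameter diam(G) ≥ 4. Let S̃_adj = (I + D)^{-1/2}(I + A)(I + D)^{-1/2} be the augmented normalized adjacency operator. Then its second largest eigenvalue satisfies λ_{N−1}(S̃_adj) > 2√(d_max − 1)/d_max − (2/diam(G))·(1 + 2√(d_max − 1)/d_max), where eigenvalues are listed in nondecreasing order λ₁ ≤ ⋯ ≤ λ_N. -/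
/-!
Take `u`, `v` with `d(u, v) = diam(G) = t`, put `r = ⌊t / 2⌋ - 1`, `q = √(d_max - 1)`, and
let `θ` be the bound. Test `S̃` on `(I + D)^{1/2} f_u`, where `f_u(w) = q ^ (-d(u, w))` on the
ball of radius `r` about `u` and `0` outside. Expanding `⟨f, (I + A) f⟩ - θ ⟨f, (I + D) f⟩`
edge by edge, every vertex `w ≠ u` of the ball gains `(q + 1)^2 / t · f(w)^2` from an edge
stepping towards `u`, and the only losses come from the at most `(d_max - 1) |S_r|` edges
leaving the ball. Since spheres grow at most by the factor `d_max - 1 = q ^ 2`, the level masses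
`|S_j| q ^ (-2j)` decrease, so the outermost one is at most `1 / r` of the mass of the ball
outside `u`; the gains therefore absorb the losses as soon as
`θ q ^ 2 ≤ r (1 - θ + (q + 1)^2 / t)`, which holds because `t ≤ 2r + 3`. The balls about `u`
and `v` are at distance at least `2`, so the two test vectors are orthogonal for the dot product
and for `S̃`; their span contains a vector orthogonal to the top eigenvector, whence
`λ_{N-1} > θ`.
-/

open Finset Matrix

namespace Matrix.IsHermitian

variable {n : Type*} [Fintype n] [DecidableEq n] {S : Matrix n n ℝ} (hS : S.IsHermitian)

lemma dotProduct_mulVec_eq_sum_eigenvalues (x y : n → ℝ) :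
    x ⬝ᵥ (S *ᵥ y) = ∑ i, hS.eigenvalues i *
      ((star (hS.eigenvectorUnitary : Matrix n n ℝ) *ᵥ x) i *
        (star (hS.eigenvectorUnitary : Matrix n n ℝ) *ᵥ y) i) := by
  set U : Matrix n n ℝ := (hS.eigenvectorUnitary : Matrix n n ℝ)
  have hspec : S = U * diagonal hS.eigenvalues * star U := by simpa using hS.spectral_theorem
  conv_lhs => rw [hspec]
  rw [← mulVec_mulVec, ← mulVec_mulVec, dotProduct_mulVec, ← mulVec_transpose,
    star_eq_conjTranspose, conjTranspose_eq_transpose_of_trivial, dotProduct]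
  simp only [mulVec_diagonal]
  exact sum_congr rfl fun i _ => by ring

lemma dotProduct_eq_sum_eigenvectorUnitary (x y : n → ℝ) :
    x ⬝ᵥ y = ∑ i, (star (hS.eigenvectorUnitary : Matrix n n ℝ) *ᵥ x) i *
        (star (hS.eigenvectorUnitary : Matrix n n ℝ) *ᵥ y) i := by
  set U : Matrix n n ℝ := (hS.eigenvectorUnitary : Matrix n n ℝ)
  have hU : U * star U = 1 := mem_unitaryGroup_iff.mp hS.eigenvectorUnitary.2
  rw [← dotProduct, star_eq_conjTranspose, conjTranspose_eq_transpose_of_trivial,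
    mulVec_transpose, ← dotProduct_mulVec, mulVec_mulVec,
    ← conjTranspose_eq_transpose_of_trivial, ← star_eq_conjTranspose, hU, one_mulVec]

lemma dotProduct_mulVec_self_le_of_forall_ne {k : n} {c : ℝ}
    (hc : ∀ i ≠ k, hS.eigenvalues i ≤ c) {x : n → ℝ}
    (hx : (star (hS.eigenvectorUnitary : Matrix n n ℝ) *ᵥ x) k = 0) :
    x ⬝ᵥ (S *ᵥ x) ≤ c * (x ⬝ᵥ x) := by
  rw [hS.dotProduct_mulVec_eq_sum_eigenvalues, hS.dotProduct_eq_sum_eigenvectorUnitary, mul_sum]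
  refine sum_le_sum fun i _ => ?_
  obtain rfl | hi := eq_or_ne i k
  · simp [hx]
  · exact mul_le_mul_of_nonneg_right (hc i hi) (mul_self_nonneg _)

/-- The quadratic form exceeds `θ` on the whole span of `a` and `b`, and this span contains a
vector orthogonal to the `k`-th eigenvector. -/
lemma lt_of_forall_ne_eigenvalues_le {k : n} {c θ : ℝ}
    (hc : ∀ i ≠ k, hS.eigenvalues i ≤ c) {a b : n → ℝ}
    (hab : a ⬝ᵥ b = 0) (hSab : a ⬝ᵥ (S *ᵥ b) = 0)
    (ha : θ * (a ⬝ᵥ a) < a ⬝ᵥ (S *ᵥ a)) (hb : θ * (b ⬝ᵥ b) < b ⬝ᵥ (S *ᵥ b)) :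
    θ < c := by
  set coord : (n → ℝ) → ℝ :=
    fun x => (star (hS.eigenvectorUnitary : Matrix n n ℝ) *ᵥ x) k
  have hSba : b ⬝ᵥ (S *ᵥ a) = 0 := by
    rw [hS.dotProduct_mulVec_eq_sum_eigenvalues, ← hSab, hS.dotProduct_mulVec_eq_sum_eigenvalues]
    exact sum_congr rfl fun i _ => by ring
  have hba : b ⬝ᵥ a = 0 := by rwa [dotProduct_comm]
  obtain ⟨x, hx, hθx⟩ : ∃ x, coord x = 0 ∧ θ * (x ⬝ᵥ x) < x ⬝ᵥ (S *ᵥ x) := by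
    by_cases hcoord : coord a = 0
    · exact ⟨a, hcoord, ha⟩
    refine ⟨coord b • a - coord a • b, ?_, ?_⟩
    · simp only [coord, mulVec_sub, mulVec_smul, Pi.sub_apply, Pi.smul_apply, smul_eq_mul]
      ring
    · have hsq : 0 < coord a ^ 2 := by positivity
      simp only [mulVec_sub, mulVec_smul, sub_dotProduct, dotProduct_sub, smul_dotProduct,
        dotProduct_smul, smul_eq_mul, hab, hba, hSab, hSba]
      nlinarith [mul_le_mul_of_nonneg_left hb.le (sq_nonneg (coord a)),
        mul_le_mul_of_nonneg_left ha.le (sq_nonneg (coord b)), mul_lt_mul_of_pos_left hb hsq]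
  exact lt_of_mul_lt_mul_right (hθx.trans_le (hS.dotProduct_mulVec_self_le_of_forall_ne hc hx))
    (dotProduct_self_star_nonneg x)

end Matrix.IsHermitian

lemma apply_le_of_ne_perm_last {N : ℕ} (hN : 2 ≤ N) {f μ : Fin N → ℝ} (hμ : Monotone μ)
    {σ : Equiv.Perm (Fin N)} (hf : μ = f ∘ σ) {i : Fin N}
    (hi : i ≠ σ ⟨N - 1, by omega⟩) :
    f i ≤ μ ⟨N - 2, by omega⟩ := by
  have hσi : (σ.symm i : ℕ) ≠ N - 1 := fun h => hi <| by
    simpa using congrArg σ (Fin.ext h : σ.symm i = ⟨N - 1, by omega⟩)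
  calc f i = μ (σ.symm i) := by simp [hf]
    _ ≤ μ ⟨N - 2, by omega⟩ := hμ (Fin.le_def.mpr (by simp only; omega))

/-- The bound of the theorem, written with `d_max = q ^ 2 + 1` and `diam(G) = t`. -/
noncomputable def secondEigenvalueBound (q t : ℝ) : ℝ :=
  2 * q / (q ^ 2 + 1) - 2 / t * (1 + 2 * q / (q ^ 2 + 1))

section SecondEigenvalueBound

variable {q t : ℝ}

lemma secondEigenvalueBound_lt_one (hq : 0 ≤ q) (ht : 0 < t) : secondEigenvalueBound q t < 1 := by
  have h : 2 * q / (q ^ 2 + 1) ≤ 1 := by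
    rw [div_le_one (by positivity)]; nlinarith [sq_nonneg (q - 1)]
  have : 0 < 2 / t * (1 + 2 * q / (q ^ 2 + 1)) := by positivity
  rw [secondEigenvalueBound]
  linarith

lemma inv_sub_secondEigenvalueBound_mul (hq : 0 < q) (ht : 0 < t) :
    q⁻¹ - secondEigenvalueBound q t / 2 * (q⁻¹ ^ 2 + 1) = (q + 1) ^ 2 / t * q⁻¹ ^ 2 := by
  rw [secondEigenvalueBound]; field_simp; ring

lemma secondEigenvalueBound_mul_sq_le (hq : 0 ≤ q) (ht : 0 < t) {r : ℝ} (hr : 0 ≤ r)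
    (htr : t ≤ 2 * r + 3) :
    secondEigenvalueBound q t * q ^ 2
      ≤ r * (1 - secondEigenvalueBound q t + (q + 1) ^ 2 / t) := by
  have key : 0 ≤ r * t * (q - 1) ^ 2 + 2 * r * (q + 1) ^ 2 + r * (q + 1) ^ 2 * (q ^ 2 + 1)
      + 2 * q ^ 2 * (q + 1) ^ 2 - 2 * q ^ 3 * t := by
    nlinarith [mul_nonneg hr (add_nonneg (sq_nonneg (q ^ 2 - q)) (sq_nonneg (q + 1))),
      mul_nonneg (mul_nonneg hr ht.le) (sq_nonneg (q - 1)),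
      mul_nonneg (sq_nonneg q) (add_nonneg (sq_nonneg (q - 1 / 2))
        (by norm_num : (0 : ℝ) ≤ 3 / 4)),
      mul_le_mul_of_nonneg_left htr (by positivity : (0 : ℝ) ≤ 2 * q ^ 3)]
  have expand : r * (1 - secondEigenvalueBound q t + (q + 1) ^ 2 / t)
      - secondEigenvalueBound q t * q ^ 2
      = (r * t * (q - 1) ^ 2 + 2 * r * (q + 1) ^ 2 + r * (q + 1) ^ 2 * (q ^ 2 + 1)
        + 2 * q ^ 2 * (q + 1) ^ 2 - 2 * q ^ 3 * t) / (t * (q ^ 2 + 1)) := by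
    rw [secondEigenvalueBound]; field_simp; ring
  have hpos : 0 ≤ r * (1 - secondEigenvalueBound q t + (q + 1) ^ 2 / t)
      - secondEigenvalueBound q t * q ^ 2 := by
    rw [expand]; positivity
  linarith

end SecondEigenvalueBound

namespace SimpleGraph

variable {V : Type*} {G : SimpleGraph V}

lemma Connected.exists_adj_dist_add_one_eq (hconn : G.Connected) {u w : V}
    (hw : 1 ≤ G.dist u w) : ∃ x, G.Adj w x ∧ G.dist u x + 1 = G.dist u w := by
  obtain ⟨p, hp⟩ := hconn.exists_walk_length_eq_dist w u
  have hne : w ≠ u := by rintro rfl; simp at hw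
  obtain ⟨x, hadj, q, rfl⟩ := Walk.exists_eq_cons_of_ne hne p
  have hx := dist_le q
  rw [dist_comm, Walk.length_cons] at hp
  rw [dist_comm] at hx
  have := hadj.diff_dist_adj (u := u)
  exact ⟨x, hadj, by omega⟩

noncomputable def ballDecay (G : SimpleGraph V) (u : V) (r : ℕ) (p : ℝ) (w : V) : ℝ :=
  if G.dist u w ≤ r then p ^ G.dist u w else 0

lemma Connected.ballDecay_mul_ballDecay_eq_zero (hconn : G.Connected) {u v : V} {r : ℕ}
    (huv : 2 * r + 2 ≤ G.dist u v) (p : ℝ) {w w' : V} (hw : G.dist w w' ≤ 1) :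
    G.ballDecay u r p w * G.ballDecay v r p w' = 0 := by
  have h₁ : G.dist u v ≤ G.dist u w + G.dist w v := hconn.dist_triangle
  have h₂ : G.dist w v ≤ G.dist w w' + G.dist w' v := hconn.dist_triangle
  rw [dist_comm (u := w')] at h₂
  unfold ballDecay
  split_ifs <;> first | omega | simp

/-- Adjacent vertices lie on equal or consecutive levels about `u`. By `hpκ`, an edge stepping
towards `u` inside the ball contributes exactly `κ (p ^ d) ^ 2`; the only negative contributions
come from the edges crossing the sphere of radius `r`. -/
lemma ballDecay_edge_ge {u a b : V} (hab : G.Adj a b) {r : ℕ} {p θ κ : ℝ} (hθ : θ ≤ 1)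
    (hκ : 0 ≤ κ) (hpκ : p - θ / 2 * (p ^ 2 + 1) = κ * p ^ 2) :
    (if G.dist u a ≤ r ∧ G.dist u b + 1 = G.dist u a then κ * (p ^ G.dist u a) ^ 2 else 0)
      - θ / 2 * (p ^ r) ^ 2 * ((if G.dist u a ≤ r ∧ r < G.dist u b then 1 else 0)
        + (if r < G.dist u a ∧ G.dist u b ≤ r then 1 else 0))
      ≤ G.ballDecay u r p a * G.ballDecay u r p b
        - θ / 2 * (G.ballDecay u r p a ^ 2 + G.ballDecay u r p b ^ 2) := by
  have hstep (m : ℕ) : p ^ (m + 1) * p ^ m - θ / 2 * ((p ^ (m + 1)) ^ 2 + (p ^ m) ^ 2)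
      = κ * (p ^ (m + 1)) ^ 2 := by
    rw [pow_succ]; linear_combination (p ^ m) ^ 2 * hpκ
  have hdist := hab.diff_dist_adj (u := u)
  unfold ballDecay
  generalize G.dist u a = i at *
  generalize G.dist u b = j at *
  obtain rfl | rfl | rfl : j = i ∨ j = i + 1 ∨ i = j + 1 := by omega
  · split_ifs <;> first | omega | nlinarith [sq_nonneg (p ^ j)]
  · split_ifs <;> first | omega | nlinarith [hstep i, sq_nonneg (p ^ (i + 1))] | skip
    all_goals (obtain rfl : r = i := by omega); linarith
  · split_ifs <;> first | omega | nlinarith [hstep j, sq_nonneg (p ^ (j + 1))] | skip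
    all_goals (obtain rfl : r = j := by omega); linarith

variable [Fintype V]

lemma Connected.sum_ballDecay_sq [DecidableEq V] (hconn : G.Connected) (u : V) (r : ℕ) (p : ℝ) :
    ∑ w, G.ballDecay u r p w ^ 2
      = 1 + ∑ a, if 1 ≤ G.dist u a ∧ G.dist u a ≤ r then (p ^ G.dist u a) ^ 2 else 0 := by
  have hsplit (w : V) : G.ballDecay u r p w ^ 2 = (if u = w then 1 else 0)
      + if 1 ≤ G.dist u w ∧ G.dist u w ≤ r then (p ^ G.dist u w) ^ 2 else 0 := by
    unfold ballDecay
    rcases eq_or_ne u w with rfl | hne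
    · simp
    · have := hconn.pos_dist_of_ne hne
      simp only [hne, if_false, zero_add]
      split_ifs <;> first | omega | ring
  simp only [hsplit, sum_add_distrib, sum_ite_eq, mem_univ, if_true]

noncomputable def distSphere (G : SimpleGraph V) (u : V) (j : ℕ) : Finset V :=
  {w | G.dist u w = j}

variable [DecidableRel G.Adj]

lemma Connected.card_filter_dist_lt_le (hconn : G.Connected) {u a : V} (ha : 1 ≤ G.dist u a) :
    #{b ∈ G.neighborFinset a | G.dist u a < G.dist u b} ≤ G.maxDegree - 1 := by
  obtain ⟨z, hz, hzd⟩ := hconn.exists_adj_dist_add_one_eq ha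
  have hlt : #{b ∈ G.neighborFinset a | G.dist u a < G.dist u b} < G.degree a := by
    rw [← card_neighborFinset_eq_degree]
    refine card_lt_card ⟨filter_subset _ _, fun hsub => ?_⟩
    have := (mem_filter.mp (hsub ((mem_neighborFinset _ _ _).mpr hz))).2
    omega
  have := G.degree_le_maxDegree a
  omega

lemma Connected.two_le_maxDegree (hconn : G.Connected) {u v : V} (huv : 2 ≤ G.dist u v) :
    2 ≤ G.maxDegree := by
  obtain ⟨x, hvx, hx⟩ := hconn.exists_adj_dist_add_one_eq (u := u) (w := v) (by omega)
  obtain ⟨y, hxy, hy⟩ := hconn.exists_adj_dist_add_one_eq (u := u) (w := x) (by omega)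
  have hvy : v ≠ y := by rintro rfl; omega
  calc 2 ≤ G.degree x := by
        rw [← card_neighborFinset_eq_degree]
        exact one_lt_card.mpr ⟨v, (mem_neighborFinset _ _ _).mpr hvx.symm,
          y, (mem_neighborFinset _ _ _).mpr hxy, hvy⟩
    _ ≤ G.maxDegree := G.degree_le_maxDegree x

lemma Connected.card_distSphere_succ_le [DecidableEq V] (hconn : G.Connected) (u : V) {j : ℕ}
    (hj : 1 ≤ j) : #(G.distSphere u (j + 1)) ≤ (G.maxDegree - 1) * #(G.distSphere u j) := by
  have hsub : G.distSphere u (j + 1) ⊆ (G.distSphere u j).biUnion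
      fun w => {b ∈ G.neighborFinset w | G.dist u w < G.dist u b} := by
    intro x hx
    simp only [distSphere, mem_filter, mem_univ, true_and] at hx
    obtain ⟨y, hxy, hyd⟩ := hconn.exists_adj_dist_add_one_eq (u := u) (w := x) (by omega)
    simp only [mem_biUnion, distSphere, mem_filter, mem_univ, true_and, mem_neighborFinset]
    exact ⟨y, by omega, hxy.symm, by omega⟩
  calc #(G.distSphere u (j + 1))
      ≤ ∑ w ∈ G.distSphere u j, #{b ∈ G.neighborFinset w | G.dist u w < G.dist u b} :=
        (card_le_card hsub).trans card_biUnion_le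
    _ ≤ ∑ _w ∈ G.distSphere u j, (G.maxDegree - 1) := by
        refine sum_le_sum fun w hw => hconn.card_filter_dist_lt_le ?_
        simp only [distSphere, mem_filter, mem_univ, true_and] at hw
        omega
    _ = (G.maxDegree - 1) * #(G.distSphere u j) := by rw [sum_const, smul_eq_mul, mul_comm]

lemma Connected.card_distSphere_mul_pow_le [DecidableEq V] (hconn : G.Connected) (u : V) {c : ℝ}
    (hc : 0 ≤ c) (hΔc : ((G.maxDegree - 1 : ℕ) : ℝ) * c ≤ 1) {j k : ℕ} (hj : 1 ≤ j)
    (hjk : j ≤ k) : #(G.distSphere u k) * c ^ k ≤ #(G.distSphere u j) * c ^ j := by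
  induction k, hjk using Nat.le_induction with
  | base => rfl
  | succ k hjk ih =>
    have hstep : (#(G.distSphere u (k + 1)) : ℝ)
        ≤ ((G.maxDegree - 1 : ℕ) : ℝ) * #(G.distSphere u k) := by
      exact_mod_cast hconn.card_distSphere_succ_le u (hj.trans hjk)
    calc (#(G.distSphere u (k + 1)) : ℝ) * c ^ (k + 1)
        ≤ ((G.maxDegree - 1 : ℕ) : ℝ) * #(G.distSphere u k) * c ^ (k + 1) := by gcongr
      _ = ((G.maxDegree - 1 : ℕ) : ℝ) * c * (#(G.distSphere u k) * c ^ k) := by ring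
      _ ≤ #(G.distSphere u k) * c ^ k := mul_le_of_le_one_left (by positivity) hΔc
      _ ≤ _ := ih

lemma Connected.mul_card_distSphere_mul_pow_le [DecidableEq V] (hconn : G.Connected) (u : V)
    {c : ℝ} (hc : 0 ≤ c) (hΔc : ((G.maxDegree - 1 : ℕ) : ℝ) * c ≤ 1) (r : ℕ) :
    r * (#(G.distSphere u r) * c ^ r)
      ≤ ∑ a, if 1 ≤ G.dist u a ∧ G.dist u a ≤ r then c ^ G.dist u a else 0 := by
  calc (r : ℝ) * (#(G.distSphere u r) * c ^ r)
      = ∑ _j ∈ Icc 1 r, #(G.distSphere u r) * c ^ r := by simp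
    _ ≤ ∑ j ∈ Icc 1 r, #(G.distSphere u j) * c ^ j := sum_le_sum fun j hj =>
        hconn.card_distSphere_mul_pow_le u hc hΔc (mem_Icc.mp hj).1 (mem_Icc.mp hj).2
    _ = ∑ j ∈ Icc 1 r, ∑ a, if G.dist u a = j then c ^ j else 0 := by
        simp only [sum_ite, sum_const, nsmul_eq_mul, mul_zero, add_zero, distSphere]
    _ = ∑ a, if 1 ≤ G.dist u a ∧ G.dist u a ≤ r then c ^ G.dist u a else 0 := by
        rw [sum_comm]
        simp only [sum_ite_eq, mem_Icc]

lemma Connected.sum_card_filter_leaving_le (hconn : G.Connected) (u : V) {r : ℕ} (hr : 1 ≤ r) :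
    ∑ a, #{b ∈ G.neighborFinset a | G.dist u a ≤ r ∧ r < G.dist u b}
      ≤ (G.maxDegree - 1) * #(G.distSphere u r) := by
  calc _ ≤ ∑ a, if G.dist u a = r then G.maxDegree - 1 else 0 := by
        refine sum_le_sum fun a _ => ?_
        split_ifs with ha
        · refine le_trans (card_le_card fun b hb => ?_)
            (hconn.card_filter_dist_lt_le (u := u) (a := a) (by omega))
          simp only [mem_filter] at hb ⊢
          exact ⟨hb.1, by omega⟩
        · refine (card_eq_zero.mpr (filter_eq_empty_iff.mpr fun b hb => ?_)).le
          have := ((mem_neighborFinset _ _ _).mp hb).diff_dist_adj (u := u)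
          omega
    _ = _ := by simp [sum_ite, distSphere, mul_comm]

lemma sum_sum_neighborFinset_swap (f : V → V → ℝ) :
    ∑ a, ∑ b ∈ G.neighborFinset a, f a b = ∑ a, ∑ b ∈ G.neighborFinset a, f b a := by
  simp only [neighborFinset_eq_filter, sum_filter]
  rw [sum_comm]
  exact sum_congr rfl fun a _ => sum_congr rfl fun b _ => by simp [G.adj_comm]

lemma dotProduct_add_dotProduct_adjMatrix_sub (F : V → ℝ) (θ : ℝ) :
    F ⬝ᵥ F + F ⬝ᵥ (G.adjMatrix ℝ *ᵥ F) - θ * ∑ w, (1 + (G.degree w : ℝ)) * F w ^ 2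
      = (1 - θ) * ∑ w, F w ^ 2
        + ∑ a, ∑ b ∈ G.neighborFinset a, (F a * F b - θ / 2 * (F a ^ 2 + F b ^ 2)) := by
  have hdeg : ∑ w, (1 + (G.degree w : ℝ)) * F w ^ 2
      = ∑ w, F w ^ 2 + ∑ a, ∑ _b ∈ G.neighborFinset a, F a ^ 2 := by
    simp only [sum_const, card_neighborFinset_eq_degree, nsmul_eq_mul, ← sum_add_distrib]
    exact sum_congr rfl fun w _ => by ring
  have hswap := sum_sum_neighborFinset_swap (G := G) fun a _ => F a ^ 2
  have hedge : ∑ a, ∑ b ∈ G.neighborFinset a, (F a * F b - θ / 2 * (F a ^ 2 + F b ^ 2))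
      = ∑ a, ∑ b ∈ G.neighborFinset a, F a * F b
        - θ / 2 * (∑ a, ∑ b ∈ G.neighborFinset a, F a ^ 2
          + ∑ a, ∑ b ∈ G.neighborFinset a, F b ^ 2) := by
    simp only [sum_sub_distrib, ← sum_add_distrib, mul_sum]
  have hadj : F ⬝ᵥ (G.adjMatrix ℝ *ᵥ F)
      = ∑ a, ∑ b ∈ G.neighborFinset a, F a * F b := by
    simp only [dotProduct, adjMatrix_mulVec_apply, mul_sum]
  have hsq : F ⬝ᵥ F = ∑ w, F w ^ 2 := sum_congr rfl fun w _ => (sq (F w)).symm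
  rw [hedge, hadj, hsq, hdeg, ← hswap]
  ring

lemma Connected.sum_ballDecay_edge_ge (hconn : G.Connected) (u : V) (r : ℕ) {p θ κ : ℝ}
    (hθ : θ ≤ 1) (hκ : 0 ≤ κ) (hpκ : p - θ / 2 * (p ^ 2 + 1) = κ * p ^ 2) :
    κ * ∑ a, (if 1 ≤ G.dist u a ∧ G.dist u a ≤ r then (p ^ G.dist u a) ^ 2 else 0)
      - θ * (p ^ r) ^ 2
        * ∑ a, (#{b ∈ G.neighborFinset a | G.dist u a ≤ r ∧ r < G.dist u b} : ℝ)
      ≤ ∑ a, ∑ b ∈ G.neighborFinset a, (G.ballDecay u r p a * G.ballDecay u r p b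
        - θ / 2 * (G.ballDecay u r p a ^ 2 + G.ballDecay u r p b ^ 2)) := by
  set bonus : V → V → ℝ := fun a b =>
    if G.dist u a ≤ r ∧ G.dist u b + 1 = G.dist u a then κ * (p ^ G.dist u a) ^ 2 else 0
  set leaving : V → V → ℝ := fun a b => if G.dist u a ≤ r ∧ r < G.dist u b then 1 else 0
  have hback (a : V) :
      κ * (if 1 ≤ G.dist u a ∧ G.dist u a ≤ r then (p ^ G.dist u a) ^ 2 else 0)
        ≤ ∑ b ∈ G.neighborFinset a, bonus a b := by
    split_ifs with ha
    · obtain ⟨z, hz, hzd⟩ := hconn.exists_adj_dist_add_one_eq ha.1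
      calc κ * (p ^ G.dist u a) ^ 2 = bonus a z := (if_pos ⟨ha.2, hzd⟩).symm
        _ ≤ _ := single_le_sum (fun b _ => by dsimp only [bonus]; split_ifs <;> positivity)
          ((mem_neighborFinset _ _ _).mpr hz)
    · rw [mul_zero]
      exact sum_nonneg fun b _ => by dsimp only [bonus]; split_ifs <;> positivity
  have hleaving (a : V) : ∑ b ∈ G.neighborFinset a, leaving a b
      = #{b ∈ G.neighborFinset a | G.dist u a ≤ r ∧ r < G.dist u b} := by
    simp only [leaving, sum_boole]
  have hentering : ∑ a, ∑ b ∈ G.neighborFinset a,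
      (if r < G.dist u a ∧ G.dist u b ≤ r then (1 : ℝ) else 0)
      = ∑ a, ∑ b ∈ G.neighborFinset a, leaving a b := by
    rw [sum_sum_neighborFinset_swap]
    simp only [leaving, and_comm]
  calc _ ≤ ∑ a, ∑ b ∈ G.neighborFinset a, bonus a b - θ / 2 * (p ^ r) ^ 2 *
        (∑ a, ∑ b ∈ G.neighborFinset a, leaving a b
          + ∑ a, ∑ b ∈ G.neighborFinset a,
            (if r < G.dist u a ∧ G.dist u b ≤ r then (1 : ℝ) else 0)) := by
        rw [hentering, mul_sum]
        simp only [hleaving]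
        linarith [sum_le_sum fun a (_ : a ∈ univ) => hback a]
    _ = ∑ a, ∑ b ∈ G.neighborFinset a, (bonus a b - θ / 2 * (p ^ r) ^ 2 * (leaving a b
          + if r < G.dist u a ∧ G.dist u b ≤ r then 1 else 0)) := by
        simp only [sum_sub_distrib, ← mul_sum, ← sum_add_distrib]
    _ ≤ _ := sum_le_sum fun a _ => sum_le_sum fun b hb =>
        ballDecay_edge_ge ((mem_neighborFinset _ _ _).mp hb) hθ hκ hpκ

lemma Connected.ballDecay_energy_pos [DecidableEq V] (hconn : G.Connected) (u : V) {r : ℕ}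
    (hr : 1 ≤ r) {p θ κ : ℝ} (hΔp : ((G.maxDegree - 1 : ℕ) : ℝ) * p ^ 2 ≤ 1)
    (hθ : θ < 1) (hκ : 0 ≤ κ) (hpκ : p - θ / 2 * (p ^ 2 + 1) = κ * p ^ 2)
    (hθΔ : θ * ((G.maxDegree - 1 : ℕ) : ℝ) ≤ r * (1 - θ + κ)) :
    θ * ∑ w, (1 + (G.degree w : ℝ)) * G.ballDecay u r p w ^ 2
      < G.ballDecay u r p ⬝ᵥ G.ballDecay u r p
        + G.ballDecay u r p ⬝ᵥ (G.adjMatrix ℝ *ᵥ G.ballDecay u r p) := by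
  have hrX := hconn.mul_card_distSphere_mul_pow_le u (sq_nonneg p) hΔp r
  have hB : ∑ a, (#{b ∈ G.neighborFinset a | G.dist u a ≤ r ∧ r < G.dist u b} : ℝ)
      ≤ ((G.maxDegree - 1 : ℕ) : ℝ) * #(G.distSphere u r) := by
    exact_mod_cast hconn.sum_card_filter_leaving_le u hr
  have hB0 :
      0 ≤ ∑ a, (#{b ∈ G.neighborFinset a | G.dist u a ≤ r ∧ r < G.dist u b} : ℝ) := by
    positivity
  have hedge := hconn.sum_ballDecay_edge_ge u r hθ.le hκ hpκ
  have hsq := hconn.sum_ballDecay_sq u r p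
  have henergy := dotProduct_add_dotProduct_adjMatrix_sub (G := G) (G.ballDecay u r p) θ
  simp only [← pow_right_comm p _ 2] at hrX
  generalize ∑ a, (if 1 ≤ G.dist u a ∧ G.dist u a ≤ r then (p ^ G.dist u a) ^ 2 else 0) = W
    at hrX hedge hsq
  generalize ∑ a, (#{b ∈ G.neighborFinset a | G.dist u a ≤ r ∧ r < G.dist u b} : ℝ) = B
    at hB hB0 hedge
  have hc : 0 ≤ (p ^ r) ^ 2 := sq_nonneg _
  have hX : 0 ≤ (#(G.distSphere u r) : ℝ) * (p ^ r) ^ 2 := by positivity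
  have hW : 0 ≤ W := le_trans (by positivity) hrX
  have hleak : θ * (p ^ r) ^ 2 * B ≤ (1 - θ + κ) * W := by
    rcases le_or_gt θ 0 with hθ0 | hθ0
    · nlinarith [mul_nonneg (mul_nonneg (neg_nonneg.mpr hθ0) hc) hB0,
        mul_nonneg (by linarith : 0 ≤ 1 - θ + κ) hW]
    · calc θ * (p ^ r) ^ 2 * B
          ≤ θ * (p ^ r) ^ 2 * (((G.maxDegree - 1 : ℕ) : ℝ) * #(G.distSphere u r)) := by
            gcongr
        _ = θ * ((G.maxDegree - 1 : ℕ) : ℝ) * (#(G.distSphere u r) * (p ^ r) ^ 2) := by ring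
        _ ≤ r * (1 - θ + κ) * (#(G.distSphere u r) * (p ^ r) ^ 2) := by gcongr
        _ ≤ (1 - θ + κ) * W := by rw [mul_comm (r : ℝ), mul_assoc]; gcongr
  nlinarith

noncomputable def augNormAdj [DecidableEq V] (G : SimpleGraph V) [DecidableRel G.Adj] :
    Matrix V V ℝ :=
  diagonal (fun v => (√(1 + G.degree v))⁻¹) * (1 + G.adjMatrix ℝ) *
    diagonal (fun v => (√(1 + G.degree v))⁻¹)

noncomputable def degreeScale (G : SimpleGraph V) [DecidableRel G.Adj] (x : V → ℝ) :
    V → ℝ :=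
  fun w => √(1 + G.degree w) * x w

lemma degreeScale_dotProduct_degreeScale (x y : V → ℝ) :
    G.degreeScale x ⬝ᵥ G.degreeScale y = ∑ w, (1 + (G.degree w : ℝ)) * (x w * y w) := by
  refine sum_congr rfl fun w _ => ?_
  have : √(1 + G.degree w) * √(1 + G.degree w) = 1 + (G.degree w : ℝ) :=
    Real.mul_self_sqrt (by positivity)
  simp only [degreeScale]
  linear_combination (x w * y w) * this

lemma degreeScale_dotProduct_augNormAdj_mulVec [DecidableEq V] (x y : V → ℝ) :
    G.degreeScale x ⬝ᵥ (G.augNormAdj *ᵥ G.degreeScale y)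
      = x ⬝ᵥ y + x ⬝ᵥ (G.adjMatrix ℝ *ᵥ y) := by
  have hs (w : V) : √(1 + G.degree w) ≠ 0 := by positivity
  have hy : diagonal (fun v => (√(1 + G.degree v))⁻¹) *ᵥ G.degreeScale y = y := by
    ext w; simp [degreeScale, mulVec_diagonal, hs w]
  rw [augNormAdj, ← mulVec_mulVec, hy, ← mulVec_mulVec, add_mulVec, one_mulVec,
    ← dotProduct_add]
  refine sum_congr rfl fun w _ => ?_
  simp only [degreeScale, mulVec_diagonal]
  field_simp

lemma Connected.degreeScale_ballDecay_orthogonal [DecidableEq V] (hconn : G.Connected)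
    {u v : V} {r : ℕ} (huv : 2 * r + 2 ≤ G.dist u v) (p : ℝ) :
    G.degreeScale (G.ballDecay u r p) ⬝ᵥ G.degreeScale (G.ballDecay v r p) = 0 ∧
      G.degreeScale (G.ballDecay u r p) ⬝ᵥ (G.augNormAdj *ᵥ G.degreeScale (G.ballDecay v r p))
        = 0 := by
  have hzero {w w' : V} (hw : G.dist w w' ≤ 1) := hconn.ballDecay_mul_ballDecay_eq_zero huv p hw
  have hdot : G.ballDecay u r p ⬝ᵥ G.ballDecay v r p = 0 :=
    sum_eq_zero fun w _ => hzero (by simp)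
  have hadj : G.ballDecay u r p ⬝ᵥ (G.adjMatrix ℝ *ᵥ G.ballDecay v r p) = 0 := by
    refine sum_eq_zero fun w _ => ?_
    rw [adjMatrix_mulVec_apply, mul_sum]
    exact sum_eq_zero fun w' hw' =>
      hzero (dist_eq_one_iff_adj.mpr ((mem_neighborFinset _ _ _).mp hw')).le
  rw [degreeScale_dotProduct_degreeScale, degreeScale_dotProduct_augNormAdj_mulVec, hdot, hadj,
    add_zero]
  exact ⟨sum_eq_zero fun w _ => by rw [hzero (by simp), mul_zero], rfl⟩

lemma Connected.secondEigenvalueBound_mul_dotProduct_lt [DecidableEq V] (hconn : G.Connected)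
    (u : V) {r : ℕ} (hr : 1 ≤ r) {t : ℝ} (ht : 0 < t) (htr : t ≤ 2 * r + 3) {q : ℝ}
    (hq : 0 < q) (hΔ : ((G.maxDegree - 1 : ℕ) : ℝ) = q ^ 2) :
    secondEigenvalueBound q t
        * (G.degreeScale (G.ballDecay u r q⁻¹) ⬝ᵥ G.degreeScale (G.ballDecay u r q⁻¹))
      < G.degreeScale (G.ballDecay u r q⁻¹) ⬝ᵥ
        (G.augNormAdj *ᵥ G.degreeScale (G.ballDecay u r q⁻¹)) := by
  have henergy := hconn.ballDecay_energy_pos u hr (p := q⁻¹) (κ := (q + 1) ^ 2 / t)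
    (by rw [hΔ, inv_pow, mul_inv_cancel₀ (by positivity)])
    (secondEigenvalueBound_lt_one hq.le ht)
    (by positivity) (inv_sub_secondEigenvalueBound_mul hq ht)
    (hΔ ▸ secondEigenvalueBound_mul_sq_le hq.le ht (Nat.cast_nonneg r) htr)
  simpa only [degreeScale_dotProduct_degreeScale, degreeScale_dotProduct_augNormAdj_mulVec, sq]
    using henergy

end SimpleGraph

/-- **Bound on the second largest eigenvalue of the augmented normalized adjacency operator.**
For a finite simple connected graph `G` on `N ≥ 2` vertices with maximum degree `d_max`
and diameter `diam(G) ≥ 4`, the second largest eigenvalue (0-based index `N-2` in a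
nondecreasing listing) of `S̃ = (I+D)^{-1/2} (I+A) (I+D)^{-1/2}` satisfies
`λ_{N-1}(S̃) > 2√(d_max - 1)/d_max - (2/diam(G)) (1 + 2√(d_max - 1)/d_max)`. -/
theorem second_largest_eigenvalue_lower_bound
    {N : ℕ} (hN : 2 ≤ N)
    (G : SimpleGraph (Fin N)) [DecidableRel G.Adj]
    (hdiam : 4 ≤ G.diam)
    (Sadj : Matrix (Fin N) (Fin N) ℝ)
    (hSdef : Sadj = Matrix.diagonal (fun v => (Real.sqrt (1 + G.degree v))⁻¹) *
      ((1 : Matrix (Fin N) (Fin N) ℝ) + G.adjMatrix ℝ) *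
      Matrix.diagonal (fun v => (Real.sqrt (1 + G.degree v))⁻¹))
    (hS : Sadj.IsHermitian)
    (μ : Fin N → ℝ) (hμmono : Monotone μ)
    (σ : Equiv.Perm (Fin N)) (hμ : μ = hS.eigenvalues ∘ σ) :
    2 * Real.sqrt ((G.maxDegree : ℝ) - 1) / (G.maxDegree : ℝ) -
      (2 / (G.diam : ℝ)) *
        (1 + 2 * Real.sqrt ((G.maxDegree : ℝ) - 1) / (G.maxDegree : ℝ)) <
      μ ⟨N - 2, by omega⟩ := by
  have hconn : G.Connected := by
    by_contra h
    rw [G.diam_eq_zero_of_not_connected h] at hdiam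
    omega
  have : Nonempty (Fin N) := ⟨⟨0, by omega⟩⟩
  obtain ⟨u, v, huv⟩ := G.exists_dist_eq_diam
  have hΔ : 2 ≤ G.maxDegree := hconn.two_le_maxDegree (u := u) (v := v) (by omega)
  set q := √((G.maxDegree : ℝ) - 1)
  have hq : ((G.maxDegree - 1 : ℕ) : ℝ) = q ^ 2 := by
    rw [Real.sq_sqrt (by norm_num; omega), Nat.cast_sub (by omega), Nat.cast_one]
  have hq0 : 0 < q := Real.sqrt_pos.mpr (by norm_num; omega)
  rw [show (G.maxDegree : ℝ) = q ^ 2 + 1 by rw [← hq, Nat.cast_sub (by omega)]; ring]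
  set r := G.diam / 2 - 1
  have hr : 1 ≤ r := by omega
  have ht : (0 : ℝ) < G.diam := by norm_cast; omega
  have htr : (G.diam : ℝ) ≤ 2 * r + 3 := by norm_cast; omega
  obtain ⟨horth, hSorth⟩ :=
    hconn.degreeScale_ballDecay_orthogonal (u := u) (v := v) (r := r) (by omega) q⁻¹
  subst hSdef
  exact hS.lt_of_forall_ne_eigenvalues_le (fun i hi => apply_le_of_ne_perm_last hN hμmono hμ hi)
    horth hSorth (hconn.secondEigenvalueBound_mul_dotProduct_lt u hr ht htr hq0 hq)
    (hconn.secondEigenvalueBound_mul_dotProduct_lt v hr ht htr hq0 hq)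
end

section
/- Let G be a finite simple graph on vertex set V with n = |V| vertices and degrees d_x ≥ 1 for all x, let γ > 0, and let f : V → ℝ be not identically zero with ∑_{x∈V} f(x) d_x = 0. Define g : V → ℝ by g(x) = f(x) − γ(∑_{y∈V} f(y)) / ∑_{y∈V}(d_y + γ). Then ∑_{x∈V} g(x)(d_x + γ) = 0 and ∑_{x∈V} g(x)²(d_x + γ) > ∑_{x∈V} f(x)² d_x. -/
/-!
Put `w x = d_x + γ`. Since `∑ f d = 0`, the constant subtracted from `f` is exactly the
`w`-weighted mean `∑ f w / ∑ w = γ S / D` of `f` (with `S = ∑ f`, `D = ∑ w`), so `g` is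
`w`-centred, and the weighted variance identity gives
`∑ g² w = ∑ f² w - (γ S)² / D = ∑ f² d + γ (∑ f² - γ S² / D)`.
The bracket is positive because `S² ≤ n ∑ f²` (Cauchy–Schwarz) and `D > n γ` (degrees are positive).
-/

open Finset

section WeightedMean

variable {ι : Type*} (s : Finset ι) (f w : ι → ℝ)

theorem sum_sub_weightedMean_mul_eq_zero (hw : ∑ i ∈ s, w i ≠ 0) :
    ∑ i ∈ s, (f i - (∑ j ∈ s, f j * w j) / ∑ j ∈ s, w j) * w i = 0 := by
  simp only [sub_mul, sum_sub_distrib, ← mul_sum]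
  field_simp
  ring

theorem sum_sq_sub_weightedMean_mul (hw : ∑ i ∈ s, w i ≠ 0) :
    ∑ i ∈ s, (f i - (∑ j ∈ s, f j * w j) / ∑ j ∈ s, w j) ^ 2 * w i =
      ∑ i ∈ s, f i ^ 2 * w i - (∑ i ∈ s, f i * w i) ^ 2 / ∑ i ∈ s, w i := by
  set c := (∑ j ∈ s, f j * w j) / ∑ j ∈ s, w j
  have hexpand : ∀ i, (f i - c) ^ 2 * w i = f i ^ 2 * w i - 2 * c * (f i * w i) + c ^ 2 * w i :=
    fun i => by ring
  simp only [hexpand, sum_add_distrib, sum_sub_distrib, ← mul_sum, c]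
  field_simp
  ring

theorem sum_mul_add_const (d : ι → ℝ) (γ : ℝ) :
    ∑ i ∈ s, f i * (d i + γ) = ∑ i ∈ s, f i * d i + γ * ∑ i ∈ s, f i := by
  rw [mul_sum, ← sum_add_distrib]
  simp only [mul_add, mul_comm γ]

end WeightedMean

theorem mul_sq_sum_lt_sum_add_mul_sum_sq {ι : Type*} [Fintype ι] {d f : ι → ℝ} {γ : ℝ}
    (hd : ∀ i, 0 < d i) (hγ : 0 ≤ γ) (hf : f ≠ 0) :
    γ * (∑ i, f i) ^ 2 < (∑ i, (d i + γ)) * ∑ i, f i ^ 2 := by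
  obtain ⟨i₀, hi₀ : f i₀ ≠ 0⟩ := Function.ne_iff.mp hf
  have hQ : 0 < ∑ i, f i ^ 2 :=
    sum_pos' (fun i _ => sq_nonneg _) ⟨i₀, mem_univ _, by positivity⟩
  have hd_sum : 0 < ∑ i, d i := sum_pos (fun i _ => hd i) ⟨i₀, mem_univ _⟩
  have hCS : (∑ i, f i) ^ 2 ≤ Fintype.card ι * ∑ i, f i ^ 2 := sq_sum_le_card_mul_sum_sq
  calc γ * (∑ i, f i) ^ 2 ≤ γ * (Fintype.card ι * ∑ i, f i ^ 2) := by gcongr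
    _ < (∑ i, d i) * ∑ i, f i ^ 2 + γ * (Fintype.card ι * ∑ i, f i ^ 2) := by
        linarith [mul_pos hd_sum hQ]
    _ = (∑ i, (d i + γ)) * ∑ i, f i ^ 2 := by
        rw [sum_add_distrib, sum_const, card_univ, nsmul_eq_mul]
        ring

theorem shifted_function_properties_general {V : Type} [Fintype V]
    (G : SimpleGraph V) [DecidableRel G.Adj]
    (hdeg : ∀ x : V, 1 ≤ G.degree x)
    (γ : ℝ) (hγ : 0 < γ)
    (f : V → ℝ) (hf : f ≠ 0)
    (hsum : ∑ x : V, f x * (G.degree x : ℝ) = 0)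
    (g : V → ℝ)
    (hg : ∀ x : V, g x = f x - γ * (∑ y : V, f y) / (∑ y : V, ((G.degree y : ℝ) + γ))) :
    (∑ x : V, g x * ((G.degree x : ℝ) + γ) = 0) ∧
    (∑ x : V, (f x) ^ 2 * (G.degree x : ℝ)) <
      ∑ x : V, (g x) ^ 2 * ((G.degree x : ℝ) + γ) := by
  set w : V → ℝ := fun x => (G.degree x : ℝ) + γ
  have hdeg_pos : ∀ x, 0 < (G.degree x : ℝ) := fun x => by exact_mod_cast hdeg x
  obtain ⟨x₀, -⟩ := Function.ne_iff.mp hf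
  have hD : 0 < ∑ x, w x := sum_pos (fun x _ => by positivity) ⟨x₀, mem_univ _⟩
  have hfw : ∑ x, f x * w x = γ * ∑ x, f x := by
    rw [sum_mul_add_const, hsum, zero_add]
  have hg_mean : g = fun x => f x - (∑ y, f y * w y) / ∑ y, w y := by
    funext x; rw [hg, hfw]
  refine ⟨hg_mean ▸ sum_sub_weightedMean_mul_eq_zero _ f w hD.ne', ?_⟩
  rw [hg_mean, sum_sq_sub_weightedMean_mul _ f w hD.ne', hfw]
  have hcorr : (γ * ∑ x, f x) ^ 2 / ∑ x, w x < γ * ∑ x, f x ^ 2 := by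
    rw [div_lt_iff₀ hD]
    linarith [mul_lt_mul_of_pos_left (mul_sq_sum_lt_sum_add_mul_sum_sq hdeg_pos hγ.le hf) hγ]
  linarith [sum_mul_add_const univ (fun x => f x ^ 2) (fun x => (G.degree x : ℝ)) γ]

/-- **The shifted test function after adding self-loops.**
Let `G` be a finite simple graph with all degrees at least `1`, `γ > 0`, and let
`f : V → ℝ` be not identically zero with `∑ f(x) d_x = 0`. Define
`g(x) = f(x) − γ (∑ f(y)) / ∑ (d_y + γ)`. Then `∑ g(x)(d_x + γ) = 0` and
`∑ g(x)² (d_x + γ) > ∑ f(x)² d_x`. -/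
theorem shifted_function_properties {V : Type} [Fintype V] [DecidableEq V]
    (G : SimpleGraph V) [DecidableRel G.Adj]
    (hdeg : ∀ x : V, 1 ≤ G.degree x)
    (γ : ℝ) (hγ : 0 < γ)
    (f : V → ℝ) (hf : f ≠ 0)
    (hsum : ∑ x : V, f x * (G.degree x : ℝ) = 0)
    (g : V → ℝ)
    (hg : ∀ x : V, g x = f x - γ * (∑ y : V, f y) / (∑ y : V, ((G.degree y : ℝ) + γ))) :
    (∑ x : V, g x * ((G.degree x : ℝ) + γ) = 0) ∧
    (∑ x : V, (f x) ^ 2 * (G.degree x : ℝ)) <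
      ∑ x : V, (g x) ^ 2 * ((G.degree x : ℝ) + γ) :=
  shifted_function_properties_general G hdeg γ hγ f hf hsum g hg
end
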